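/- arXiv:2408.15983 — 8 statements merged into one kernel-verified Lean document; each statement's English description precedes it below -/
import Mathlib

section
/- Let f : ℝ → ℝ be lower semicontinuous, and let x < y. If the set T(x,y) = {z ∈ (x,y) : f(z) > max(f(x), f(y))} is nonempty, then there exist u, v with x ≤ u < v ≤ y such that (u,v) ⊆ T(x,y), max(f(u), f(v)) ≤ max(f(x), f(y)), and for all z ∈ (u,v), f(z) > max(f(u), f(v)). -/
theorem stmt_1 (f : ℝ → ℝ) (hf : LowerSemicontinuous f) (x y : ℝ) (hxy : x < y)
    (hne : {z : ℝ | z ∈ Set.Ioo x y ∧ f z > max (f x) (f y)}.Nonempty) :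
    ∃ u v : ℝ, x ≤ u ∧ u < v ∧ v ≤ y ∧
      Set.Ioo u v ⊆ {z : ℝ | z ∈ Set.Ioo x y ∧ f z > max (f x) (f y)} ∧
      max (f u) (f v) ≤ max (f x) (f y) ∧
      ∀ z ∈ Set.Ioo u v, f z > max (f u) (f v) := by
  set M := max (f x) (f y) with hM
  obtain ⟨z0, hz0mem, hz0⟩ := hne
  -- neighborhood lemma
  have key : ∀ p : ℝ, M < f p → ∃ ε > 0, ∀ t, |t - p| < ε → M < f t := by
    intro p hp
    have := hf p M hp
    rw [Metric.eventually_nhds_iff] at this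
    obtain ⟨ε, hε, h⟩ := this
    exact ⟨ε, hε, fun t ht => h (by simpa [Real.dist_eq] using ht)⟩
  set A := {t : ℝ | x ≤ t ∧ t ≤ z0 ∧ f t ≤ M} with hA
  set B := {t : ℝ | z0 ≤ t ∧ t ≤ y ∧ f t ≤ M} with hB
  have hxA : x ∈ A := ⟨le_refl x, le_of_lt hz0mem.1, le_max_left _ _⟩
  have hyB : y ∈ B := ⟨le_of_lt hz0mem.2, le_refl y, le_max_right _ _⟩
  have hAne : A.Nonempty := ⟨x, hxA⟩
  have hBne : B.Nonempty := ⟨y, hyB⟩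
  have hAbdd : BddAbove A := ⟨z0, fun t ht => ht.2.1⟩
  have hBbdd : BddBelow B := ⟨z0, fun t ht => ht.1⟩
  set u := sSup A with hu
  set v := sInf B with hv
  have hxu : x ≤ u := le_csSup hAbdd hxA
  have hvy : v ≤ y := csInf_le hBbdd hyB
  obtain ⟨ε, hε, hball⟩ := key z0 hz0
  have huz0 : u < z0 := by
    have : u ≤ z0 - min ε ((z0 - x)/2) := by
      apply csSup_le hAne
      intro a ha
      by_contra hcon
      push_neg at hcon
      have h1 : |a - z0| < ε := by
        have := ha.2.1
        rw [abs_sub_lt_iff]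
        constructor
        · linarith
        · have : min ε ((z0 - x)/2) ≤ ε := min_le_left _ _
          linarith
      exact absurd (hball a h1) (not_lt.mpr ha.2.2)
    have hmin : 0 < min ε ((z0 - x)/2) := lt_min hε (by linarith [hz0mem.1])
    linarith
  have hz0v : z0 < v := by
    have : z0 + min ε ((y - z0)/2) ≤ v := by
      apply le_csInf hBne
      intro b hb
      by_contra hcon
      push_neg at hcon
      have h1 : |b - z0| < ε := by
        rw [abs_sub_lt_iff]
        constructor
        · have : min ε ((y - z0)/2) ≤ ε := min_le_left _ _
          linarith
        · linarith [hb.1]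
      exact absurd (hball b h1) (not_lt.mpr hb.2.2)
    have hmin : 0 < min ε ((y - z0)/2) := lt_min hε (by linarith [hz0mem.2])
    linarith
  have hfu : f u ≤ M := by
    by_contra hcon
    push_neg at hcon
    obtain ⟨δ, hδ, hb⟩ := key u hcon
    obtain ⟨a, haA, hla⟩ := exists_lt_of_lt_csSup hAne (show u - δ < u by linarith)
    have hau : a ≤ u := le_csSup hAbdd haA
    have : |a - u| < δ := by rw [abs_sub_lt_iff]; constructor <;> linarith
    exact absurd (hb a this) (not_lt.mpr haA.2.2)
  have hfv : f v ≤ M := by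
    by_contra hcon
    push_neg at hcon
    obtain ⟨δ, hδ, hb⟩ := key v hcon
    obtain ⟨b, hbB, hlb⟩ := exists_lt_of_csInf_lt hBne (show v < v + δ by linarith)
    have hbv : v ≤ b := csInf_le hBbdd hbB
    have : |b - v| < δ := by rw [abs_sub_lt_iff]; constructor <;> linarith
    exact absurd (hb b this) (not_lt.mpr hbB.2.2)
  have hmain : ∀ z ∈ Set.Ioo u v, M < f z := by
    rintro z ⟨huz, hzv⟩
    by_contra hcon
    push_neg at hcon
    rcases le_or_gt z z0 with h | h
    · have : z ∈ A := ⟨le_trans hxu (le_of_lt huz), h, hcon⟩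
      exact absurd (le_csSup hAbdd this) (not_le.mpr huz)
    · have : z ∈ B := ⟨le_of_lt h, le_trans (le_of_lt hzv) hvy, hcon⟩
      exact absurd (csInf_le hBbdd this) (not_le.mpr hzv)
  refine ⟨u, v, hxu, lt_trans huz0 hz0v, hvy, ?_, max_le hfu hfv, ?_⟩
  · rintro z ⟨huz, hzv⟩
    exact ⟨⟨lt_of_le_of_lt hxu huz, lt_of_lt_of_le hzv hvy⟩, hmain z ⟨huz, hzv⟩⟩
  · intro z hz
    exact lt_of_le_of_lt (max_le hfu hfv) (hmain z hz)
end

section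
/- Let f : ℝ → ℝ be lower semicontinuous. If for every pair x < y there exists z ∈ (x,y) with f(z) ≤ max(f(x), f(y)), then f is quasiconvex: for all x, y and all z between x and y, f(z) ≤ max(f(x), f(y)). -/
theorem stmt_2 (f : ℝ → ℝ) (hf : LowerSemicontinuous f)
    (h : ∀ x y : ℝ, x < y → ∃ z ∈ Set.Ioo x y, f z ≤ max (f x) (f y)) :
    ∀ x y z : ℝ, x ≤ z → z ≤ y → f z ≤ max (f x) (f y) := by
  intro x y z hxz hzy
  by_contra hc
  push_neg at hc
  set M := max (f x) (f y) with hM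
  set S : Set ℝ := {w | w ∈ Set.Icc x z ∧ f w ≤ M} with hS
  set T : Set ℝ := {w | w ∈ Set.Icc z y ∧ f w ≤ M} with hT
  have hSclosed : IsClosed S := by
    have := hf.isClosed_preimage M
    exact (isClosed_Icc.inter this)
  have hTclosed : IsClosed T := by
    have := hf.isClosed_preimage M
    exact (isClosed_Icc.inter this)
  have hSne : S.Nonempty := ⟨x, ⟨le_refl x, hxz⟩, le_max_left _ _⟩
  have hTne : T.Nonempty := ⟨y, ⟨hzy, le_refl y⟩, le_max_right _ _⟩
  have hSbdd : BddAbove S := ⟨z, fun w hw => hw.1.2⟩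
  have hTbdd : BddBelow T := ⟨z, fun w hw => hw.1.1⟩
  set a := sSup S with ha
  set b := sInf T with hb
  have haS : a ∈ S := hSclosed.csSup_mem hSne hSbdd
  have hbT : b ∈ T := hTclosed.csInf_mem hTne hTbdd
  have haz : a < z := lt_of_le_of_ne haS.1.2 (fun e => absurd haS.2 (by rw [e]; exact not_le.2 hc))
  have hzb : z < b := lt_of_le_of_ne hbT.1.1 (fun e => absurd hbT.2 (by rw [← e]; exact not_le.2 hc))
  obtain ⟨w, hw, hfw⟩ := h a b (haz.trans hzb)
  have hfwM : f w ≤ M := hfw.trans (max_le haS.2 hbT.2)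
  rcases le_or_gt w z with hwz | hzw
  · have : w ∈ S := ⟨⟨haS.1.1.trans hw.1.le, hwz⟩, hfwM⟩
    exact absurd (le_csSup hSbdd this) (not_le.2 hw.1)
  · have : w ∈ T := ⟨⟨hzw.le, hw.2.le.trans hbT.1.2⟩, hfwM⟩
    exact absurd (csInf_le hTbdd this) (not_le.2 hw.2)
end

section
/- Let V be a real vector space, D ⊆ V a convex set, and f : D → ℝ a function that is lower semicontinuous when restricted to every segment [x,y] ⊆ D (with the segment's natural one-dimensional topology, i.e., t ↦ f(t•x + (1-t)•y) is lower semicontinuous on [0,1]). If for every x, y ∈ D there exists t ∈ (0,1) with f(t•x + (1-t)•y) ≤ max(f(x), f(y)), then f is quasiconvex on D: for all x, y ∈ D and all t ∈ [0,1], f(t•x + (1-t)•y) ≤ max(f(x), f(y)). -/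
open Set Filter Topology

lemma lsc_closed_sublevel {g : ℝ → ℝ} {s : Set ℝ} (hs : IsClosed s)
    (hg : LowerSemicontinuousOn g s) (M : ℝ) :
    IsClosed {t ∈ s | g t ≤ M} := by
  rw [← isOpen_compl_iff]
  rw [isOpen_iff_mem_nhds]
  intro x hx
  by_cases hxs : x ∈ s
  · have hMx : M < g x := by
      by_contra hc
      exact hx ⟨hxs, not_lt.1 hc⟩
    have := hg x hxs M hMx
    rw [eventually_nhdsWithin_iff] at this
    filter_upwards [this] with z hz hzS
    exact absurd hzS.2 (not_le.2 (hz hzS.1))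
  · have : sᶜ ∈ 𝓝 x := hs.isOpen_compl.mem_nhds hxs
    filter_upwards [this] with z hz hzS
    exact hz hzS.1

theorem stmt_3 (V : Type*) [AddCommGroup V] [Module ℝ V] (D : Set V) (hD : Convex ℝ D)
    (f : V → ℝ)
    (hf : ∀ x ∈ D, ∀ y ∈ D,
      LowerSemicontinuousOn (fun t : ℝ => f (t • x + (1 - t) • y)) (Set.Icc 0 1))
    (h : ∀ x ∈ D, ∀ y ∈ D, ∃ t ∈ Set.Ioo (0:ℝ) 1,
      f (t • x + (1 - t) • y) ≤ max (f x) (f y)) :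
    ∀ x ∈ D, ∀ y ∈ D, ∀ t ∈ Set.Icc (0:ℝ) 1,
      f (t • x + (1 - t) • y) ≤ max (f x) (f y) := by
  intro x hx y hy t ht
  by_contra hlt
  push_neg at hlt
  set g : ℝ → ℝ := fun s => f (s • x + (1 - s) • y) with hg
  set M := max (f x) (f y) with hM
  set S : Set ℝ := {s ∈ Icc (0:ℝ) 1 | g s ≤ M} with hS
  have hSclosed : IsClosed S := lsc_closed_sublevel isClosed_Icc (hf x hx y hy) M
  have h0 : (0:ℝ) ∈ S := by
    refine ⟨⟨le_refl 0, zero_le_one⟩, ?_⟩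
    simp only [hg, zero_smul, sub_zero, one_smul, zero_add]
    exact le_max_right _ _
  have h1 : (1:ℝ) ∈ S := by
    refine ⟨⟨zero_le_one, le_refl 1⟩, ?_⟩
    simp only [hg, one_smul, sub_self, zero_smul, add_zero]
    exact le_max_left _ _
  have htS : t ∉ S := fun hts => absurd hts.2 (not_le.2 hlt)
  -- a = sup of S below t, b = inf of S above t
  set A := S ∩ Icc 0 t with hA
  set B := S ∩ Icc t 1 with hB
  have hAne : A.Nonempty := ⟨0, h0, le_refl 0, ht.1⟩
  have hBne : B.Nonempty := ⟨1, h1, ht.2, le_refl 1⟩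
  have hAbdd : BddAbove A := ⟨t, fun z hz => hz.2.2⟩
  have hBbdd : BddBelow B := ⟨t, fun z hz => hz.2.1⟩
  have hAcl : IsClosed A := hSclosed.inter isClosed_Icc
  have hBcl : IsClosed B := hSclosed.inter isClosed_Icc
  set a := sSup A with ha
  set b := sInf B with hb
  have haA : a ∈ A := hAcl.csSup_mem hAne hAbdd
  have hbB : b ∈ B := hBcl.csInf_mem hBne hBbdd
  have hat : a < t := lt_of_le_of_ne haA.2.2 (fun e => htS (e ▸ haA.1))
  have htb : t < b := lt_of_le_of_ne hbB.2.1 (fun e => htS (e.symm ▸ hbB.1))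
  have hab : a < b := hat.trans htb
  -- points in D
  set p := a • x + (1 - a) • y with hp
  set q := b • x + (1 - b) • y with hq
  have ha01 : a ∈ Icc (0:ℝ) 1 := haA.1.1
  have hb01 : b ∈ Icc (0:ℝ) 1 := hbB.1.1
  have hpD : p ∈ D := hD hx hy ha01.1 (by linarith [ha01.2]) (by ring)
  have hqD : q ∈ D := hD hx hy hb01.1 (by linarith [hb01.2]) (by ring)
  obtain ⟨s, hs, hsle⟩ := h p hpD q hqD
  set u := s * a + (1 - s) * b with hu
  have hcomb : s • p + (1 - s) • q = u • x + (1 - u) • y := by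
    simp only [hp, hq, hu]
    module
  have hub : u < b := by nlinarith [hs.1, hs.2, hab]
  have hau : a < u := by nlinarith [hs.1, hs.2, hab]
  have hu01 : u ∈ Icc (0:ℝ) 1 := ⟨by nlinarith [ha01.1, hb01.1, hs.1, hs.2],
    by nlinarith [ha01.2, hb01.2, hs.1, hs.2]⟩
  have hgu : g u ≤ M := by
    rw [hg]
    calc f (u • x + (1 - u) • y) = f (s • p + (1 - s) • q) := by rw [hcomb]
    _ ≤ max (f p) (f q) := hsle
    _ ≤ M := max_le (haA.1.2) (hbB.1.2)
  have huS : u ∈ S := ⟨hu01, hgu⟩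
  rcases le_or_gt u t with hut | htu
  · exact absurd (le_csSup hAbdd ⟨huS, hu01.1, hut⟩) (not_le.2 hau)
  · exact absurd (csInf_le hBbdd ⟨huS, htu.le, hu01.2⟩) (not_le.2 hub)
end

section
/- Let f : ℝ → ℝ be upper semicontinuous. If f is not quasiconvex, then there exist points p ≤ q such that f(p) = f(q), f attains a local maximum at both p and q, the local maximum at p is strict from the left (there exists x₀ < p with f(x) < f(p) for all x ∈ (x₀, p)), and the local maximum at q is strict from the right (there exists y₀ > q with f(y) < f(q) for all y ∈ (q, y₀)). -/
/-!
Failure of quasiconvexity gives `a ≤ z ≤ b` with `max (f a) (f b) < f z`. By upper semicontinuity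
`f` attains its maximum on `[a, b]`, and the set of maximizers is compact; its least element `p`
and greatest element `q` are the required points. They lie in the open interval `(a, b)` because
the endpoints are not maximizers, so they are local maxima, and the maximum is strict to the left
of `p` and to the right of `q` by the extremality of `p` and `q` among maximizers.
-/

open Set Filter Topology OrderDual

namespace UpperSemicontinuous

variable {α β : Type*} [LinearOrder α] [TopologicalSpace α] [OrderClosedTopology α]
  [CompactIccSpace α] [LinearOrder β] {f : α → β} {a b : α}

theorem exists_isMaxOn_Icc_lt_left (hf : UpperSemicontinuous f) (hab : a ≤ b) :
    ∃ p ∈ Icc a b, IsMaxOn f (Icc a b) p ∧ ∀ x ∈ Ico a p, f x < f p := by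
  obtain ⟨m, hm, hmax⟩ :=
    (hf.upperSemicontinuousOn _).exists_isMaxOn (nonempty_Icc.2 hab) isCompact_Icc
  have hargmax : IsCompact (Icc a b ∩ f ⁻¹' Ici (f m)) :=
    isCompact_Icc.inter_right (hf.isClosed_preimage _)
  obtain ⟨p, ⟨hp, hmp⟩, hleast⟩ := hargmax.exists_isLeast ⟨m, hm, le_rfl⟩
  refine ⟨p, hp, fun x hx => (hmax hx).trans hmp, fun x hx => lt_of_not_ge fun hpx => ?_⟩
  exact hx.2.not_ge (hleast ⟨⟨hx.1, hx.2.le.trans hp.2⟩, hmp.trans hpx⟩)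

theorem exists_isMaxOn_Icc_lt_right (hf : UpperSemicontinuous f) (hab : a ≤ b) :
    ∃ q ∈ Icc a b, IsMaxOn f (Icc a b) q ∧ ∀ y ∈ Ioc q b, f y < f q := by
  obtain ⟨q, hq, hmax, hlt⟩ := exists_isMaxOn_Icc_lt_left (α := αᵒᵈ) (f := f ∘ ofDual)
    (a := toDual b) (b := toDual a) hf hab
  exact ⟨ofDual q, ⟨hq.2, hq.1⟩, fun y hy => hmax ⟨hy.2, hy.1⟩,
    fun y hy => hlt (toDual y) ⟨hy.2, hy.1⟩⟩

end UpperSemicontinuous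

theorem stmt_6 (f : ℝ → ℝ) (hf : UpperSemicontinuous f)
    (h : ¬ ∀ x y z : ℝ, x ≤ z → z ≤ y → f z ≤ max (f x) (f y)) :
    ∃ p q : ℝ, p ≤ q ∧ f p = f q ∧
      IsLocalMax f p ∧ IsLocalMax f q ∧
      (∃ x₀ < p, ∀ x ∈ Set.Ioo x₀ p, f x < f p) ∧
      (∃ y₀ > q, ∀ y ∈ Set.Ioo q y₀, f y < f q) := by
  push Not at h
  obtain ⟨a, b, z, haz, hzb, hz⟩ := h
  have hab : a ≤ b := haz.trans hzb
  obtain ⟨p, hp, hp_max, hp_lt⟩ := hf.exists_isMaxOn_Icc_lt_left hab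
  obtain ⟨q, hq, hq_max, hq_lt⟩ := hf.exists_isMaxOn_Icc_lt_right hab
  have hfpq : f p = f q := le_antisymm (hq_max hp) (hp_max hq)
  have hpq : p ≤ q := le_of_not_gt fun hqp => (hq_lt p ⟨hqp, hp.2⟩).ne hfpq
  have hap : a < p := hp.1.lt_of_ne <| by
    rintro rfl
    exact (hz.trans_le (hp_max ⟨haz, hzb⟩)).not_ge (le_max_left _ _)
  have hqb : q < b := hq.2.lt_of_ne <| by
    rintro rfl
    exact (hz.trans_le (hq_max ⟨haz, hzb⟩)).not_ge (le_max_right _ _)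
  exact ⟨p, q, hpq, hfpq, hp_max.isLocalMax (Icc_mem_nhds hap (hpq.trans_lt hqb)),
    hq_max.isLocalMax (Icc_mem_nhds (hap.trans_le hpq) hqb),
    ⟨a, hap, fun x hx => hp_lt x (Ioo_subset_Ico_self hx)⟩,
    ⟨b, hqb, fun y hy => hq_lt y (Ioo_subset_Ioc_self hy)⟩⟩
end

section
/- Let f : ℝ → ℝ be upper semicontinuous. Suppose every local maximum of f is not strict from either side: for every p at which f has a local maximum, and every δ > 0, there exist x ∈ (p-δ, p) and y ∈ (p, p+δ) with f(x) ≥ f(p) and f(y) ≥ f(p). Then f is quasiconvex. -/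
private lemma usc_max_on_Icc (f : ℝ → ℝ) (hf : UpperSemicontinuous f) {x y : ℝ}
    (hxy : x ≤ y) : ∃ p ∈ Set.Icc x y, ∀ t ∈ Set.Icc x y, f t ≤ f p := by
  have hne : (Set.Icc x y).Nonempty := Set.nonempty_Icc.2 hxy
  haveI : Nonempty (Set.Icc x y) := hne.to_subtype
  set K : Set.Icc x y → Set ℝ := fun i => Set.Icc x y ∩ f ⁻¹' Set.Ici (f i) with hK
  have hcl : ∀ i, IsClosed (K i) := fun i =>
    isClosed_Icc.inter (hf.isClosed_preimage (f i))
  have hc : ∀ i, IsCompact (K i) := fun i =>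
    isCompact_Icc.inter_right (hf.isClosed_preimage (f i))
  have hn : ∀ i, (K i).Nonempty := fun i => ⟨i, i.2, Set.mem_preimage.2 Set.self_mem_Ici⟩
  have hd : Directed (· ⊇ ·) K := by
    intro i j
    rcases le_total (f i) (f j) with hij | hij
    · exact ⟨j, fun s hs => ⟨hs.1, le_trans hij hs.2⟩, fun s hs => hs⟩
    · exact ⟨i, fun s hs => hs, fun s hs => ⟨hs.1, le_trans hij hs.2⟩⟩
  obtain ⟨p, hp⟩ := IsCompact.nonempty_iInter_of_directed_nonempty_isCompact_isClosed
    K hd hn hc hcl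
  simp only [Set.mem_iInter] at hp
  obtain ⟨i0⟩ := ‹Nonempty (Set.Icc x y)›
  refine ⟨p, (hp i0).1, fun t ht => (hp ⟨t, ht⟩).2⟩

theorem stmt_7 (f : ℝ → ℝ) (hf : UpperSemicontinuous f)
    (h : ∀ p : ℝ, IsLocalMax f p → ∀ δ > 0,
      (∃ x ∈ Set.Ioo (p - δ) p, f p ≤ f x) ∧ (∃ y ∈ Set.Ioo p (p + δ), f p ≤ f y)) :
    ∀ x y z : ℝ, x ≤ z → z ≤ y → f z ≤ max (f x) (f y) := by
  intro x y z hxz hzy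
  by_contra hcon
  push_neg at hcon
  obtain ⟨hx, hy⟩ : f x < f z ∧ f y < f z := ⟨(max_lt_iff.1 hcon).1, (max_lt_iff.1 hcon).2⟩
  have hxy : x ≤ y := hxz.trans hzy
  obtain ⟨p, hpmem, hpmax⟩ := usc_max_on_Icc f hf hxy
  -- attainment set
  set A : Set ℝ := Set.Icc x y ∩ f ⁻¹' Set.Ici (f p) with hA
  have hAc : IsCompact A := isCompact_Icc.inter_right (hf.isClosed_preimage (f p))
  have hAne : A.Nonempty := ⟨p, hpmem, Set.mem_preimage.2 Set.self_mem_Ici⟩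
  set q : ℝ := sSup A with hq
  have hqA : q ∈ A := hAc.sSup_mem hAne
  have hfq : f q = f p := le_antisymm (hpmax q hqA.1) hqA.2
  have hfzp : f z ≤ f p := hpmax z ⟨hxz, hzy⟩
  have hqx : x < q := by
    rcases lt_or_eq_of_le hqA.1.1 with h' | h'
    · exact h'
    · rw [h', hfq] at hx; exact absurd (hfzp.trans_lt hx) (lt_irrefl _)
  have hqy : q < y := by
    rcases lt_or_eq_of_le hqA.1.2 with h' | h'
    · exact h'
    · rw [← h', hfq] at hy; exact absurd (hfzp.trans_lt hy) (lt_irrefl _)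
  have hlm : IsLocalMax f q := by
    have hmem : Set.Icc x y ∈ nhds q :=
      mem_nhds_iff.2 ⟨Set.Ioo x y, Set.Ioo_subset_Icc_self, isOpen_Ioo, hqx, hqy⟩
    exact Filter.eventually_of_mem hmem fun t ht => (hpmax t ht).trans_eq hfq.symm
  obtain ⟨-, y', hy'mem, hy'⟩ := h q hlm (y - q) (by linarith)
  have hy'A : y' ∈ A := ⟨⟨by linarith [hy'mem.1, hqx], by linarith [hy'mem.2]⟩,
    hfq ▸ hy'⟩
  have : y' ≤ q := le_csSup hAc.bddAbove hy'A
  linarith [hy'mem.1]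
end

section
/- Let V be a real vector space, D ⊆ V convex, and f : D → ℝ radially upper semicontinuous (upper semicontinuous along every segment). If for every segment in D, the restriction of f to that segment has no local maximum that is strict from either side, then f is quasiconvex on D. -/
open Set Filter

/-- An upper semicontinuous real function on a compact set attains its maximum. -/
lemma usc_exists_max {g : ℝ → ℝ} {K : Set ℝ} (hK : IsCompact K) (hne : K.Nonempty)
    (hg : UpperSemicontinuousOn g K) : ∃ p ∈ K, ∀ t ∈ K, g t ≤ g p := by
  by_contra hcon
  push_neg at hcon
  have hT : ∀ p : ℝ, p ∈ K → ∃ t, t ∈ K ∧ g p < g t := by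
    intro p hp
    obtain ⟨t, ht, hlt⟩ := hcon p hp
    exact ⟨t, ht, hlt⟩
  choose T hT₁ hT₂ using hT
  have hU : ∀ (p : ℝ) (hp : p ∈ K), {t | t ∈ K → g t < g (T p hp)} ∈ nhds p := by
    intro p hp
    have := (hg p hp) (g (T p hp)) (hT₂ p hp)
    rw [eventually_nhdsWithin_iff] at this
    exact this
  obtain ⟨F, hF⟩ := hK.elim_nhds_subcover' (fun p hp => {t | t ∈ K → g t < g (T p hp)}) hU
  have hFne : F.Nonempty := by
    obtain ⟨a, ha⟩ := hne
    have := hF ha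
    simp only [Set.mem_iUnion] at this
    obtain ⟨x, hx, _⟩ := this
    exact ⟨x, hx⟩
  obtain ⟨b, hb, hbmax⟩ := F.exists_max_image (fun x => g (T x.1 x.2)) hFne
  set q := T b.1 b.2 with hq
  have hqK : q ∈ K := hT₁ b.1 b.2
  have := hF hqK
  simp only [Set.mem_iUnion] at this
  obtain ⟨c, hc, hcq⟩ := this
  have h1 : g q < g (T c.1 c.2) := hcq hqK
  have h2 : g (T c.1 c.2) ≤ g q := hbmax c hc
  linarith

theorem stmt_8 (V : Type*) [AddCommGroup V] [Module ℝ V] (D : Set V) (hD : Convex ℝ D)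
    (f : V → ℝ)
    (hf : ∀ x ∈ D, ∀ y ∈ D,
      UpperSemicontinuousOn (fun t : ℝ => f (t • x + (1 - t) • y)) (Set.Icc 0 1))
    (h : ∀ x ∈ D, ∀ y ∈ D, ∀ p ∈ Set.Ioo (0:ℝ) 1,
      (∀ᶠ t in nhds p, t ∈ Set.Icc (0:ℝ) 1 →
        f (t • x + (1 - t) • y) ≤ f (p • x + (1 - p) • y)) →
      ∀ δ > 0, (∃ s ∈ Set.Ioo (p - δ) p, s ∈ Set.Icc (0:ℝ) 1 ∧
          f (p • x + (1 - p) • y) ≤ f (s • x + (1 - s) • y)) ∧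
        (∃ s ∈ Set.Ioo p (p + δ), s ∈ Set.Icc (0:ℝ) 1 ∧
          f (p • x + (1 - p) • y) ≤ f (s • x + (1 - s) • y))) :
    ∀ x ∈ D, ∀ y ∈ D, ∀ t ∈ Set.Icc (0:ℝ) 1,
      f (t • x + (1 - t) • y) ≤ max (f x) (f y) := by
  intro x hx y hy t ht
  set g : ℝ → ℝ := fun t => f (t • x + (1 - t) • y) with hg
  have hg1 : g 1 = f x := by simp [hg]
  have hg0 : g 0 = f y := by simp [hg]
  by_contra hcon
  push_neg at hcon
  -- get a maximum point p of g on [0,1]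
  obtain ⟨p, hpI, hpmax⟩ := usc_exists_max (isCompact_Icc (a := (0:ℝ)) (b := 1))
    (Set.nonempty_Icc.2 zero_le_one) (hf x hx y hy)
  have hgp_gt : max (f x) (f y) < g p := lt_of_lt_of_le hcon (hpmax t ht)
  -- set of maximum points
  set K : Set ℝ := {s | s ∈ Set.Icc (0:ℝ) 1 ∧ g p ≤ g s} with hK
  have hKsub : K ⊆ Set.Icc (0:ℝ) 1 := fun s hs => hs.1
  have hKne : K.Nonempty := ⟨p, hpI, le_refl _⟩
  have hKbdd : BddAbove K := ⟨1, fun s hs => hs.1.2⟩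
  set q : ℝ := sSup K with hqdef
  have hq0 : (0:ℝ) ≤ q := le_trans hpI.1 (le_csSup hKbdd ⟨hpI, le_refl _⟩)
  have hq1 : q ≤ 1 := csSup_le hKne (fun s hs => hs.1.2)
  have hqI : q ∈ Set.Icc (0:ℝ) 1 := ⟨hq0, hq1⟩
  -- q ∈ K by upper semicontinuity
  have hqK : g p ≤ g q := by
    by_contra hqlt
    push_neg at hqlt
    have hev : ∀ᶠ s in nhdsWithin q (Set.Icc (0:ℝ) 1), g s < g p :=
      (hf x hx y hy) q hqI (g p) hqlt
    have hclos : q ∈ closure K := csSup_mem_closure hKne hKbdd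
    have hne : (nhdsWithin q K).NeBot := mem_closure_iff_nhdsWithin_neBot.1 hclos
    have hev' : ∀ᶠ s in nhdsWithin q K, g s < g p :=
      hev.filter_mono (nhdsWithin_mono _ hKsub)
    have hmem : ∀ᶠ s in nhdsWithin q K, s ∈ K := self_mem_nhdsWithin
    obtain ⟨s, hs1, hs2⟩ := (hev'.and hmem).exists
    exact absurd hs2.2 (not_le.2 hs1)
  have hgq : g q = g p := le_antisymm (hpmax q hqI) hqK
  -- q is in the open interval
  have hq0' : q ≠ 0 := by
    intro h0
    rw [h0] at hgq
    rw [hg0] at hgq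
    have := le_max_right (f x) (f y)
    linarith
  have hq1' : q ≠ 1 := by
    intro h1
    rw [h1] at hgq
    rw [hg1] at hgq
    have := le_max_left (f x) (f y)
    linarith
  have hqIoo : q ∈ Set.Ioo (0:ℝ) 1 := ⟨lt_of_le_of_ne hq0 (Ne.symm hq0'), lt_of_le_of_ne hq1 hq1'⟩
  -- the premise of h at q
  have hprem : ∀ᶠ s in nhds q, s ∈ Set.Icc (0:ℝ) 1 → g s ≤ g q := by
    apply Filter.Eventually.of_forall
    intro s hs
    rw [hgq]
    exact hpmax s hs
  obtain ⟨_, ⟨s, hsIoo, hsI, hsge⟩⟩ := h x hx y hy q hqIoo hprem 1 one_pos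
  have hsK : s ∈ K := ⟨hsI, by rw [← hgq]; exact hsge⟩
  have : s ≤ q := le_csSup hKbdd hsK
  exact absurd hsIoo.1 (not_lt.2 this)
end

section
/- Let f : ℝ → ℝ be lower semicontinuous, let x < y, and suppose (u,v) is an open interval contained in T(x,y) = {z ∈ (x,y) : f(z) > max(f(x), f(y))} with u, v ∉ T(x,y). Then for all a, b ∈ [u,v] with a ≠ b and all t ∈ (0,1), f(t*a + (1-t)*b) > max(f(u), f(v)). -/
theorem stmt_15 (f : ℝ → ℝ) (hf : LowerSemicontinuous f) (x y u v : ℝ) (hxy : x < y)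
    (huv : u < v)
    (hsub : Set.Ioo u v ⊆ {z ∈ Set.Ioo x y | f z > max (f x) (f y)})
    (hu : u ∉ {z ∈ Set.Ioo x y | f z > max (f x) (f y)})
    (hv : v ∉ {z ∈ Set.Ioo x y | f z > max (f x) (f y)}) :
    ∀ a ∈ Set.Icc u v, ∀ b ∈ Set.Icc u v, a ≠ b → ∀ t ∈ Set.Ioo (0:ℝ) 1,
      f (t * a + (1 - t) * b) > max (f u) (f v) := by
  intro a ha b hb hab t ht
  have hsub' := (Set.Ioo_subset_Ioo_iff huv).1 (fun z hz => (hsub hz).1)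
  have hxu : x ≤ u := hsub'.1
  have hvy : v ≤ y := hsub'.2
  -- f u ≤ max (f x) (f y)
  have hfu : f u ≤ max (f x) (f y) := by
    rcases eq_or_lt_of_le hxu with h | h
    · rw [← h]; exact le_max_left _ _
    · have huIoo : u ∈ Set.Ioo x y := ⟨h, lt_of_lt_of_le huv hvy⟩
      by_contra hc
      exact hu ⟨huIoo, lt_of_not_ge hc⟩
  have hfv : f v ≤ max (f x) (f y) := by
    rcases eq_or_lt_of_le hvy with h | h
    · rw [h]; exact le_max_right _ _
    · have hvIoo : v ∈ Set.Ioo x y := ⟨lt_of_le_of_lt hxu huv, h⟩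
      by_contra hc
      exact hv ⟨hvIoo, lt_of_not_ge hc⟩
  set c := t * a + (1 - t) * b with hc
  have ht0 : 0 < t := ht.1
  have ht1 : t < 1 := ht.2
  have h1t : 0 < 1 - t := by linarith
  have hcmem : c ∈ Set.Ioo u v := by
    rcases lt_or_gt_of_ne hab with h | h
    · constructor
      · have : u < t * a + (1 - t) * b := by nlinarith [ha.1, hb.1]
        simpa [hc] using this
      · have : t * a + (1 - t) * b < v := by nlinarith [ha.2, hb.2]
        simpa [hc] using this
    · constructor
      · have : u < t * a + (1 - t) * b := by nlinarith [ha.1, hb.1]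
        simpa [hc] using this
      · have : t * a + (1 - t) * b < v := by nlinarith [ha.2, hb.2]
        simpa [hc] using this
  have := (hsub hcmem).2
  calc max (f u) (f v) ≤ max (f x) (f y) := max_le hfu hfv
    _ < f c := this
end

section
/- Let f : ℝ → ℝ be lower semicontinuous and let x < y. Then T(x,y) = {z ∈ (x,y) : f(z) > max(f(x), f(y))} can be written as a countable union of pairwise disjoint nonempty open intervals (u_i, v_i) ⊆ (x,y), and for each i, max(f(u_i), f(v_i)) ≤ max(f(x), f(y)) while f(z) > max(f(u_i), f(v_i)) for all z ∈ (u_i, v_i). -/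
open Set

lemma open_preconnected_eq_Ioo {s : Set ℝ} (hs : IsOpen s) (hc : IsPreconnected s)
    (hne : s.Nonempty) (hbd : BddBelow s) (hba : BddAbove s) :
    s = Set.Ioo (sInf s) (sSup s) := by
  apply Subset.antisymm
  · intro z hz
    obtain ⟨ε, hε, hball⟩ := Metric.isOpen_iff.mp hs z hz
    have h1 : z - ε/2 ∈ s := hball (by
      rw [Metric.mem_ball, Real.dist_eq, show z - ε/2 - z = -(ε/2) by ring, abs_neg,
        abs_of_pos (by linarith)]; linarith)
    have h2 : z + ε/2 ∈ s := hball (by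
      rw [Metric.mem_ball, Real.dist_eq, show z + ε/2 - z = ε/2 by ring,
        abs_of_pos (by linarith)]; linarith)
    have := csInf_le hbd h1
    have := le_csSup hba h2
    constructor <;> linarith
  · intro w hw
    obtain ⟨a, ha, haw⟩ := exists_lt_of_csInf_lt hne hw.1
    obtain ⟨b, hb, hwb⟩ := exists_lt_of_lt_csSup hne hw.2
    exact hc.ordConnected.out ha hb ⟨haw.le, hwb.le⟩

theorem stmt_17 (f : ℝ → ℝ) (hf : LowerSemicontinuous f) (x y : ℝ) (hxy : x < y) :
    ∃ A : Set (ℝ × ℝ), A.Countable ∧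
      (∀ p ∈ A, p.1 < p.2 ∧ Set.Ioo p.1 p.2 ⊆ Set.Ioo x y) ∧
      (∀ p ∈ A, ∀ q ∈ A, p ≠ q → Disjoint (Set.Ioo p.1 p.2) (Set.Ioo q.1 q.2)) ∧
      ({z ∈ Set.Ioo x y | f z > max (f x) (f y)} = ⋃ p ∈ A, Set.Ioo p.1 p.2) ∧
      (∀ p ∈ A, max (f p.1) (f p.2) ≤ max (f x) (f y) ∧
        ∀ z ∈ Set.Ioo p.1 p.2, f z > max (f p.1) (f p.2)) := by
  set M := max (f x) (f y) with hM
  set T : Set ℝ := {z ∈ Set.Ioo x y | f z > M} with hTdef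
  have hTopen : IsOpen T := by
    have : T = Set.Ioo x y ∩ f ⁻¹' Set.Ioi M := by
      ext z; simp [hTdef, and_comm, Set.mem_preimage, gt_iff_lt]
    rw [this]
    exact isOpen_Ioo.inter (hf.isOpen_preimage M)
  have hTsub : T ⊆ Set.Ioo x y := fun z hz => hz.1
  set C : ℝ → Set ℝ := fun z => connectedComponentIn T z with hC
  -- component structure
  have hkey : ∀ z ∈ T, C z = Set.Ioo (sInf (C z)) (sSup (C z)) := by
    intro z hz
    have hsub : C z ⊆ T := connectedComponentIn_subset T z
    exact open_preconnected_eq_Ioo (hTopen.connectedComponentIn)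
      (isPreconnected_connectedComponentIn)
      ⟨z, mem_connectedComponentIn hz⟩
      (⟨x, fun a ha => ((hTsub (hsub ha)).1).le⟩)
      (⟨y, fun a ha => ((hTsub (hsub ha)).2).le⟩)
  set A : Set (ℝ × ℝ) :=
    (fun q : ℚ => (sInf (C (q : ℝ)), sSup (C (q : ℝ)))) '' {q : ℚ | (q : ℝ) ∈ T} with hA
  have hmem : ∀ p ∈ A, ∃ z, z ∈ T ∧ p = (sInf (C z), sSup (C z)) := by
    rintro p ⟨q, hq, rfl⟩; exact ⟨q, hq, rfl⟩
  -- basic facts for members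
  have hfacts : ∀ z ∈ T, sInf (C z) < sSup (C z) ∧ Set.Ioo (sInf (C z)) (sSup (C z)) = C z := by
    intro z hz
    have h1 := hkey z hz
    have hne : (Set.Ioo (sInf (C z)) (sSup (C z))).Nonempty :=
      h1 ▸ ⟨z, mem_connectedComponentIn hz⟩
    exact ⟨nonempty_Ioo.mp hne, h1.symm⟩
  refine ⟨A, ?_, ?_, ?_, ?_, ?_⟩
  · exact (Set.to_countable {q : ℚ | (q : ℝ) ∈ T}).image _
  · rintro p ⟨q, hq, rfl⟩
    obtain ⟨hlt, heq⟩ := hfacts _ hq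
    exact ⟨hlt, heq ▸ (connectedComponentIn_subset T _).trans hTsub⟩
  · rintro p ⟨q₁, hq₁, rfl⟩ p' ⟨q₂, hq₂, rfl⟩ hne
    obtain ⟨_, heq₁⟩ := hfacts _ hq₁
    obtain ⟨_, heq₂⟩ := hfacts _ hq₂
    rw [heq₁, heq₂]
    by_contra hdis
    obtain ⟨a, ha₁, ha₂⟩ := Set.not_disjoint_iff.mp hdis
    have e1 := connectedComponentIn_eq ha₁
    have e2 := connectedComponentIn_eq ha₂
    have e3 : C (q₁ : ℝ) = C (q₂ : ℝ) := e1.trans e2.symm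
    exact hne (by simp only [e3])
  · apply Subset.antisymm
    · intro z hz
      obtain ⟨hlt, heq⟩ := hfacts _ hz
      obtain ⟨q, hq1, hq2⟩ := exists_rat_btwn hlt
      have hqC : (q : ℝ) ∈ C z := heq ▸ ⟨hq1, hq2⟩
      have hqT : (q : ℝ) ∈ T := connectedComponentIn_subset T z hqC
      have hCeq : C (q : ℝ) = C z := (connectedComponentIn_eq hqC).symm
      refine Set.mem_iUnion₂.mpr ⟨(sInf (C z), sSup (C z)), ⟨q, hqT, by simp only [hCeq]⟩, ?_⟩
      show z ∈ Set.Ioo (sInf (C z)) (sSup (C z))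
      exact heq.symm.subset (mem_connectedComponentIn hz)
    · intro z hz
      obtain ⟨p, hp, hzp⟩ := Set.mem_iUnion₂.mp hz
      obtain ⟨w, hw, rfl⟩ := hmem p hp
      obtain ⟨_, heq⟩ := hfacts _ hw
      exact connectedComponentIn_subset T w (heq.subset hzp)
  · rintro p ⟨q, hq, rfl⟩
    obtain ⟨hlt, heq⟩ := hfacts _ hq
    set u := sInf (C (q : ℝ))
    set v := sSup (C (q : ℝ))
    have hsubxy : Set.Ioo u v ⊆ Set.Ioo x y := heq ▸ (connectedComponentIn_subset T _).trans hTsub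
    obtain ⟨hxu, hvy⟩ := (Set.Ioo_subset_Ioo_iff hlt).mp hsubxy
    -- endpoints not in T
    have hend : ∀ w : ℝ, w ∈ closure (C (q : ℝ)) → w ∉ C (q : ℝ) → w ∉ T := by
      intro w hwc hwn hwT
      have hins : insert w (C (q : ℝ)) ⊆ connectedComponentIn T (q : ℝ) := by
        apply IsPreconnected.subset_connectedComponentIn
        · exact isPreconnected_connectedComponentIn.subset_closure
            (Set.subset_insert _ _) (Set.insert_subset hwc subset_closure)
        · exact Set.mem_insert_of_mem _ (mem_connectedComponentIn hq)
        · exact Set.insert_subset hwT (connectedComponentIn_subset T _)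
      exact hwn (hins (Set.mem_insert _ _))
    have hclo : closure (C (q : ℝ)) = Set.Icc u v := by
      rw [← heq]; exact closure_Ioo hlt.ne
    have huT : u ∉ T := hend u (hclo ▸ Set.left_mem_Icc.mpr hlt.le)
      (by rw [← heq]; simp)
    have hvT : v ∉ T := hend v (hclo ▸ Set.right_mem_Icc.mpr hlt.le)
      (by rw [← heq]; simp)
    have hfu : f u ≤ M := by
      rcases eq_or_lt_of_le hxu with h | h
      · rw [← h]; exact le_max_left _ _
      · by_contra hcon
        exact huT ⟨⟨h, hlt.trans_le hvy⟩, lt_of_not_ge hcon⟩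
    have hfv : f v ≤ M := by
      rcases eq_or_lt_of_le hvy with h | h
      · rw [h]; exact le_max_right _ _
      · by_contra hcon
        exact hvT ⟨⟨hxu.trans_lt hlt, h⟩, lt_of_not_ge hcon⟩
    refine ⟨max_le hfu hfv, fun z hz => ?_⟩
    have hzT : z ∈ T := connectedComponentIn_subset T _ (heq ▸ hz)
    exact lt_of_le_of_lt (max_le hfu hfv) hzT.2
end
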